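/- arXiv:1210.3433 — 4 statements merged into one kernel-verified Lean document; each statement's English description precedes it below -/
import Mathlib

section
/- Let p be a prime, let T be an element of ℤ/pℤ, and let D be a nonzero element of ℤ/pℤ. Let N denote the number of x ∈ ℤ/pℤ satisfying x² − Tx + D = 0 (so N ∈ {0,1,2}). Then the number of matrices g ∈ GL₂(ℤ/pℤ) with trace equal to T and determinant equal to D is exactly p² + p(N − 1) (as an equality of integers). -/
/-!
A matrix `!![a, b; c, d]` with trace `T` and determinant `D ≠ 0` is automatically invertible, and
is determined by `a` and a pair `(b, c)` with `b * c = a * (T - a) - D = -χ(a)`, where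
`χ = X² - T X + D`. Over a field with `q` elements, `b * c = k` has `q - 1` solutions when
`k ≠ 0` and `2q - 1` when `k = 0`, so summing over `a` gives `q (q - 1) + q N`.
-/

open Matrix

section CardMulEq

variable {F : Type*} [Field F]

theorem Nat.card_mul_left_eq_of_ne_zero {b : F} (hb : b ≠ 0) (k : F) :
    Nat.card {c : F // b * c = k} = 1 :=
  Nat.card_eq_one_iff_exists.mpr ⟨⟨b⁻¹ * k, by field_simp⟩, fun ⟨c, hc⟩ => by
    subst hc; ext; field_simp⟩

variable [Fintype F] [DecidableEq F]

theorem Nat.card_zero_mul_eq (k : F) :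
    Nat.card {c : F // 0 * c = k} = if k = 0 then Nat.card F else 0 := by
  split_ifs with hk
  · simp [hk]
  · simp [Ne.symm hk]

theorem Nat.card_prod_mul_eq (k : F) :
    Nat.card {bc : F × F // bc.1 * bc.2 = k} =
      Nat.card F - 1 + if k = 0 then Nat.card F else 0 := by
  rw [Nat.card_congr (Equiv.subtypeProdEquivSigmaSubtype fun b c => b * c = k), Nat.card_sigma,
    ← Finset.add_sum_erase _ _ (Finset.mem_univ 0), Nat.card_zero_mul_eq,
    Finset.sum_congr rfl fun b hb => Nat.card_mul_left_eq_of_ne_zero (Finset.ne_of_mem_erase hb) k]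
  simp [Finset.card_erase_of_mem, add_comm]

end CardMulEq

noncomputable def Matrix.GeneralLinearGroup.traceDetEquiv {n R : Type*} [Fintype n]
    [DecidableEq n] [CommRing R] (T : R) {D : R} (hD : IsUnit D) :
    {g : GL n R | trace (g : Matrix n n R) = T ∧ Matrix.det (g : Matrix n n R) = D} ≃
      {m : Matrix n n R // trace m = T ∧ m.det = D} where
  toFun g := ⟨g.1, g.2⟩
  invFun m := ⟨nonsingInvUnit m.1 (m.2.2.symm ▸ hD), m.2⟩
  left_inv _ := Subtype.ext (Units.ext rfl)
  right_inv _ := rfl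

def Matrix.finTwoTraceDetEquiv {R : Type*} [CommRing R] (T D : R) :
    {m : Matrix (Fin 2) (Fin 2) R // trace m = T ∧ m.det = D} ≃
      Σ a : R, {bc : R × R // bc.1 * bc.2 = -(a ^ 2 - T * a + D)} where
  toFun m := ⟨m.1 0 0, (m.1 0 1, m.1 1 0), by
    obtain ⟨m, hT, hD⟩ := m
    rw [trace_fin_two] at hT
    rw [det_fin_two] at hD
    linear_combination m 0 0 * hT - hD⟩
  invFun x := ⟨!![x.1, x.2.1.1; x.2.1.2, T - x.1], by simp, by
    rw [det_fin_two_of]; linear_combination -x.2.2⟩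
  left_inv := by
    rintro ⟨m, hT, -⟩
    ext i j
    rw [trace_fin_two] at hT
    fin_cases i <;> fin_cases j <;> simp [← hT]
  right_inv _ := rfl

theorem Matrix.GeneralLinearGroup.card_finTwo_trace_det_eq {F : Type*} [Field F] [Fintype F]
    [DecidableEq F] (T : F) {D : F} (hD : D ≠ 0) :
    Nat.card {g : GL (Fin 2) F |
        trace (g : Matrix (Fin 2) (Fin 2) F) = T ∧ Matrix.det (g : Matrix (Fin 2) (Fin 2) F) = D} =
      Nat.card F * (Nat.card F - 1) + Nat.card F * Nat.card {x : F | x ^ 2 - T * x + D = 0} := by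
  rw [Nat.card_congr ((traceDetEquiv T hD.isUnit).trans (finTwoTraceDetEquiv T D)),
    Nat.card_sigma]
  simp only [Nat.card_prod_mul_eq, neg_eq_zero]
  rw [Finset.sum_add_distrib, Finset.sum_const, Finset.sum_ite]
  simp [Nat.card_eq_fintype_card, Fintype.card_subtype, mul_comm]

theorem stmt_0 (p : ℕ) (hp : p.Prime) (T D : ZMod p) (hD : D ≠ 0)
    (N : ℕ) (hN : N = Nat.card {x : ZMod p | x ^ 2 - T * x + D = 0}) :
    (Nat.card {g : GL (Fin 2) (ZMod p) |
        Matrix.trace (g : Matrix (Fin 2) (Fin 2) (ZMod p)) = T ∧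
        Matrix.det (g : Matrix (Fin 2) (Fin 2) (ZMod p)) = D} : ℤ) =
      (p : ℤ) ^ 2 + (p : ℤ) * ((N : ℤ) - 1) := by
  have : Fact p.Prime := ⟨hp⟩
  rw [GeneralLinearGroup.card_finTwo_trace_det_eq T hD, ← hN, Nat.card_zmod]
  push_cast [Nat.cast_sub hp.one_le]
  ring
end

section
/- Let f(x,y) ∈ ℤ[x,y] be a squarefree, non-constant polynomial in two variables. Then there exists a constant C > 0 (depending only on f) such that for every prime p, the number of matrices g ∈ GL₂(ℤ/pℤ) with f(tr g, det g) ≡ 0 (mod p) is at most C·p³. -/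
/-! For a prime `p` not dividing every coefficient of `f`, the reduction `f̄` is a nonzero
polynomial of degree at most `deg f` over `𝔽_p`, so by Schwartz–Zippel it has at most
`deg f · p` zeros `(t, d) ∈ 𝔽_p²`. Each fibre of `g ↦ (tr g, det g)` on 2×2 matrices has at
most `2p²` elements, giving the bound `2 deg f · p³`. The finitely many remaining primes divide a
fixed nonzero coefficient `c` of `f`, and for them the trivial bound `|GL₂(𝔽_p)| ≤ p⁴ ≤ |c| p³`
suffices. -/

open Matrix MvPolynomial Finset

theorem MvPolynomial.totalDegree_map_le {R S σ : Type*} [CommSemiring R] [CommSemiring S]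
    (φ : R →+* S) (f : MvPolynomial σ R) : (map φ f).totalDegree ≤ f.totalDegree :=
  Finset.sup_mono (support_map_subset φ f)

theorem Matrix.GeneralLinearGroup.card_le_card_pow {R n : Type*} [CommRing R] [Fintype R]
    [Fintype n] [DecidableEq n] :
    Nat.card (GL n R) ≤ Fintype.card R ^ (Fintype.card n * Fintype.card n) := by
  calc Nat.card (GL n R) ≤ Nat.card (Matrix n n R) :=
        Nat.card_le_card_of_injective (↑) fun _ _ => Units.ext
    _ = _ := by simp [Nat.card_eq_fintype_card, Matrix, pow_mul]

theorem MvPolynomial.le_natAbs_coeff_of_map_eq_zero {σ : Type*} {f : MvPolynomial σ ℤ} {p : ℕ}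
    (hf : map (Int.castRingHom (ZMod p)) f = 0) {m : σ →₀ ℕ} (hm : coeff m f ≠ 0) :
    p ≤ (coeff m f).natAbs := by
  have h := congrArg (coeff m) hf
  rw [coeff_map, coeff_zero, eq_intCast, ZMod.intCast_zmod_eq_zero_iff_dvd] at h
  exact Nat.le_of_dvd (Int.natAbs_pos.2 hm) (Int.natCast_dvd.1 h)

variable {F : Type*} [Field F] [Fintype F]

theorem MvPolynomial.card_zeros_le_totalDegree_mul [DecidableEq F] {n : ℕ}
    {P : MvPolynomial (Fin (n + 1)) F} (hP : P ≠ 0) :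
    #{x : Fin (n + 1) → F | eval x P = 0} ≤ P.totalDegree * Fintype.card F ^ n := by
  have hq : (0 : ℚ≥0) < Fintype.card F := by exact_mod_cast Fintype.card_pos
  have h := schwartz_zippel_totalDegree hP univ
  rw [Fintype.piFinset_univ, card_univ, div_le_div_iff₀ (by positivity) hq, pow_succ,
    ← mul_assoc, mul_le_mul_iff_left₀ hq] at h
  exact_mod_cast h

theorem Matrix.card_trace_det_fiber_le [DecidableEq F] (t d : F) :
    #{A : Matrix (Fin 2) (Fin 2) F | A.trace = t ∧ A.det = d} ≤ 2 * Fintype.card F ^ 2 := by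
  calc #{A : Matrix (Fin 2) (Fin 2) F | A.trace = t ∧ A.det = d}
      ≤ #(univ : Finset (F × (F ⊕ F))) := by
        refine card_le_card_of_injOn
          (fun A => (A 0 0, if A 0 1 = 0 then .inr (A 1 0) else .inl (A 0 1)))
          (fun _ _ => mem_coe.2 (mem_univ _)) ?_
        intro A hA B hB hAB
        simp only [coe_filter, mem_univ, true_and, Set.mem_ofPred_eq, trace_fin_two,
          det_fin_two] at hA hB
        obtain ⟨h00, h⟩ := Prod.mk.inj hAB
        have h11 : A 1 1 = B 1 1 := by linear_combination hA.1 - hB.1 - h00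
        have hbc : A 0 1 * A 1 0 = B 0 1 * B 1 0 := by
          linear_combination (B 1 1) * h00 + (A 0 0) * h11 - hA.2 + hB.2
        have h01_10 : A 0 1 = B 0 1 ∧ A 1 0 = B 1 0 := by
          split_ifs at h with hA0 hB0 hB0
          · exact ⟨hA0.trans hB0.symm, Sum.inr_injective h⟩
          · have hb := Sum.inl_injective h
            exact ⟨hb, mul_left_cancel₀ hA0 (hbc.trans (by rw [hb]))⟩
        ext i j
        fin_cases i <;> fin_cases j
        exacts [h00, h01_10.1, h01_10.2, h11]
    _ = 2 * Fintype.card F ^ 2 := by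
        simp only [card_univ, Fintype.card_prod, Fintype.card_sum]; ring

theorem Matrix.GeneralLinearGroup.card_aeval_trace_det_eq_zero_le {R : Type*} [CommRing R]
    [Algebra R F] {f : MvPolynomial (Fin 2) R} (hf : MvPolynomial.map (algebraMap R F) f ≠ 0) :
    Nat.card {g : GL (Fin 2) F |
        aeval ![(g : Matrix (Fin 2) (Fin 2) F).trace, (g : Matrix (Fin 2) (Fin 2) F).det] f = 0}
      ≤ 2 * f.totalDegree * Fintype.card F ^ 3 := by
  classical
  set q := Fintype.card F
  let τ : GL (Fin 2) F → Fin 2 → F := fun g =>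
    ![(g : Matrix (Fin 2) (Fin 2) F).trace, (g : Matrix (Fin 2) (Fin 2) F).det]
  set S : Finset (GL (Fin 2) F) := {g | aeval (τ g) f = 0}
  have hfiber : ∀ x ∈ S.image τ, #{g ∈ S | τ g = x} ≤ 2 * q ^ 2 := fun x _ =>
    calc #{g ∈ S | τ g = x}
        ≤ #{A : Matrix (Fin 2) (Fin 2) F | A.trace = x 0 ∧ A.det = x 1} :=
          card_le_card_of_injOn (↑) (fun g hg => by
            simp only [coe_filter, Set.mem_ofPred_eq] at hg
            simp [← hg.2, τ]) (fun g _ g' _ h => Units.ext h)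
      _ ≤ 2 * q ^ 2 := card_trace_det_fiber_le _ _
  have himage : #(S.image τ) ≤ f.totalDegree * q :=
    calc #(S.image τ) ≤ #{x : Fin 2 → F | eval x (MvPolynomial.map (algebraMap R F) f) = 0} :=
          card_le_card (image_subset_iff.2 fun g hg => by
            simp only [S, mem_filter] at hg
            simpa only [mem_filter, mem_univ, true_and, ← eval₂_eq_eval_map, ← aeval_def]
              using hg)
      _ ≤ f.totalDegree * q := by
          simpa using (MvPolynomial.card_zeros_le_totalDegree_mul hf).trans
            (Nat.mul_le_mul_right _ (totalDegree_map_le _ f))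
  calc Nat.card _ = #S := by rw [Nat.card_eq_fintype_card, Fintype.card_subtype]; rfl
    _ ≤ 2 * q ^ 2 * #(S.image τ) := card_le_mul_card_image S _ hfiber
    _ ≤ 2 * q ^ 2 * (f.totalDegree * q) := by gcongr
    _ = 2 * f.totalDegree * q ^ 3 := by ring

theorem stmt_4_general (f : MvPolynomial (Fin 2) ℤ) (hsf : Squarefree f) :
    ∃ C : ℝ, 0 < C ∧ ∀ p : ℕ, p.Prime →
      (Nat.card {g : GL (Fin 2) (ZMod p) |
          MvPolynomial.aeval
            ![Matrix.trace (g : Matrix (Fin 2) (Fin 2) (ZMod p)),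
              Matrix.det (g : Matrix (Fin 2) (Fin 2) (ZMod p))] f = 0} : ℝ) ≤
        C * (p : ℝ) ^ 3 := by
  obtain ⟨m, hm⟩ := exists_coeff_ne_zero hsf.ne_zero
  set N := (coeff m f).natAbs
  refine ⟨(2 * f.totalDegree + N : ℕ), by positivity, fun p hp => ?_⟩
  have : Fact p.Prime := ⟨hp⟩
  refine ((Nat.cast_le (α := ℝ)).2 (?_ : _ ≤ (2 * f.totalDegree + N) * p ^ 3)).trans_eq
    (by push_cast; ring)
  by_cases hf : MvPolynomial.map (Int.castRingHom (ZMod p)) f = 0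
  · calc _ ≤ Nat.card (GL (Fin 2) (ZMod p)) := Finite.card_subtype_le _
      _ ≤ p * p ^ 3 := by
          simpa [← pow_succ'] using GeneralLinearGroup.card_le_card_pow (R := ZMod p) (n := Fin 2)
      _ ≤ (2 * f.totalDegree + N) * p ^ 3 := by
          gcongr; exact (le_natAbs_coeff_of_map_eq_zero hf hm).trans (Nat.le_add_left _ _)
  · calc _ ≤ 2 * f.totalDegree * p ^ 3 := by
          simpa using GeneralLinearGroup.card_aeval_trace_det_eq_zero_le (f := f) hf
      _ ≤ (2 * f.totalDegree + N) * p ^ 3 := by gcongr; omega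

theorem stmt_4 (f : MvPolynomial (Fin 2) ℤ) (hsf : Squarefree f)
    (hnc : 1 ≤ f.totalDegree) :
    ∃ C : ℝ, 0 < C ∧ ∀ p : ℕ, p.Prime →
      (Nat.card {g : GL (Fin 2) (ZMod p) |
          MvPolynomial.aeval
            ![Matrix.trace (g : Matrix (Fin 2) (Fin 2) (ZMod p)),
              Matrix.det (g : Matrix (Fin 2) (Fin 2) (ZMod p))] f = 0} : ℝ) ≤
        C * (p : ℝ) ^ 3 :=
  stmt_4_general f hsf
end

section
/- Let f(x,y) ∈ ℤ[x,y] be a squarefree polynomial in two variables. Then there exists a constant C > 0 (depending only on f) such that for every prime p, the number of pairs (T, D) ∈ (ℤ/pℤ)² satisfying f(T,D) ≡ 0, (∂f/∂x)(T,D) ≡ 0, and (∂f/∂y)(T,D) ≡ 0 (all mod p) is at most C. -/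
/-!
View `f` as a polynomial in `x` over `ℤ[y]`. By Gauss's lemma it stays squarefree over the
fraction field `ℚ(y)`, where (characteristic zero) it is therefore coprime to its derivative;
clearing denominators gives `u f + v ∂f/∂x = a(y)` with `0 ≠ a ∈ ℤ[y]`, and symmetrically
`u' f + v' ∂f/∂y = b(x)`. So every common zero `(T, D)` modulo `p` has `b(T) = 0` and
`a(D) = 0`. A nonzero `c ∈ ℤ[x]` has at most `max (deg c) |lc c|` roots modulo `p`: either its
reduction is nonzero, or `p ∣ lc c` and then `p` itself is that small.
-/

open Polynomial MvPolynomial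
open scoped nonZeroDivisors

theorem Squarefree.map_equiv {M N F : Type*} [Monoid M] [Monoid N] [EquivLike F M N]
    [MulEquivClass F M N] (e : F) {x : M} (hx : Squarefree x) : Squarefree (e x) := by
  intro y hy
  obtain ⟨z, rfl⟩ := EquivLike.surjective e y
  rw [← map_mul, map_dvd_iff] at hy
  exact (hx z hy).map e

namespace Polynomial

section FractionMap

variable {R K : Type*} [CommRing R] [IsDomain R] [Field K] [Algebra R K] [IsFractionRing R K]

theorem exists_isPrimitive_map_associated [NormalizedGCDMonoid R] {π : K[X]} (hπ : π ≠ 0) :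
    ∃ P : R[X], P.IsPrimitive ∧ Associated (P.map (algebraMap R K)) π := by
  have hinj := IsFractionRing.injective R K
  set N := IsLocalization.integerNormalization R⁰ π
  obtain ⟨c, hc0, hNπ⟩ := IsLocalization.integerNormalization_spec R⁰ π
  have hN : N ≠ 0 := fun h => hπ (IsFractionRing.integerNormalization_eq_zero_iff.mp h)
  refine ⟨N.primPart, N.isPrimitive_primPart, ?_⟩
  have hcontent : IsUnit (C (algebraMap R K N.content)) := by
    simpa [map_eq_zero_iff _ hinj, content_eq_zero_iff] using hN
  have hc : IsUnit (C (algebraMap R K c)) := by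
    simpa [map_eq_zero_iff _ hinj] using nonZeroDivisors.ne_zero hc0
  have e : C (algebraMap R K N.content) * N.primPart.map (algebraMap R K)
      = C (algebraMap R K c) * π := by
    rw [← map_C, ← Polynomial.map_mul, ← N.eq_C_content_mul_primPart, hNπ, Algebra.smul_def,
      algebraMap_apply]
  rw [← associated_isUnit_mul_left_iff hcontent, e, associated_isUnit_mul_left_iff hc]
  exact .refl π

theorem squarefree_map_fraction_map [NormalizedGCDMonoid R] {q : R[X]} (hq : Squarefree q) :
    Squarefree (q.map (algebraMap R K)) := by
  intro π hπ
  have hπ0 : π ≠ 0 := by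
    rintro rfl
    simp [Polynomial.map_eq_zero_iff (IsFractionRing.injective R K), hq.ne_zero] at hπ
  obtain ⟨P, hP, hPπ⟩ := exists_isPrimitive_map_associated (R := R) hπ0
  have hPP : P * P ∣ q := (hP.mul hP).dvd_of_fraction_map_dvd_fraction_map (K := K) <| by
    rw [Polynomial.map_mul]
    exact (hPπ.mul_mul hPπ).dvd.trans hπ
  exact hPπ.isUnit ((hq P hPP).map (Polynomial.mapRingHom (algebraMap R K)))

theorem exists_mul_add_mul_eq_C_of_isCoprime_map {f g : R[X]}
    (h : IsCoprime (f.map (algebraMap R K)) (g.map (algebraMap R K))) :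
    ∃ u v : R[X], ∃ a : R, a ≠ 0 ∧ u * f + v * g = C a := by
  obtain ⟨U, V, hUV⟩ := h
  obtain ⟨c, hc, hU⟩ := IsLocalization.integerNormalization_spec R⁰ U
  obtain ⟨d, hd, hV⟩ := IsLocalization.integerNormalization_spec R⁰ V
  refine ⟨C d * IsLocalization.integerNormalization R⁰ U,
    C c * IsLocalization.integerNormalization R⁰ V, c * d,
    mul_ne_zero (nonZeroDivisors.ne_zero hc) (nonZeroDivisors.ne_zero hd), ?_⟩
  apply map_injective _ (IsFractionRing.injective R K)
  simp only [Polynomial.map_add, Polynomial.map_mul, map_C, hU, hV, Algebra.smul_def,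
    algebraMap_apply, map_mul]
  linear_combination C (algebraMap R K c) * C (algebraMap R K d) * hUV

end FractionMap

theorem exists_mul_add_mul_derivative_eq_C {R : Type*} [CommRing R] [IsDomain R]
    [NormalizedGCDMonoid R] [CharZero R] {q : R[X]} (hq : Squarefree q) :
    ∃ u v : R[X], ∃ a : R, a ≠ 0 ∧ u * q + v * derivative q = C a := by
  apply exists_mul_add_mul_eq_C_of_isCoprime_map (K := FractionRing R)
  rw [← derivative_map, ← separable_def]
  exact PerfectField.separable_iff_squarefree.mpr (squarefree_map_fraction_map hq)

theorem Bivariate.equivMvPolynomial_C {R : Type*} [CommSemiring R] (a : R[X]) :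
    equivMvPolynomial R (Polynomial.C a) = Polynomial.aeval (MvPolynomial.X 0) a := by
  induction a using Polynomial.induction_on' with
  | add p q hp hq => simp [hp, hq]
  | monomial n r => simp [← Polynomial.C_mul_X_pow_eq_monomial]

theorem ncard_setOf_aeval_eq_zero_le {c : ℤ[X]} (hc : c ≠ 0) (p : ℕ) [Fact p.Prime] :
    {x : ZMod p | Polynomial.aeval x c = 0}.ncard ≤ max c.natDegree c.leadingCoeff.natAbs := by
  by_cases hmap : c.map (Int.castRingHom (ZMod p)) = 0
  · have hp : (p : ℤ) ∣ c.leadingCoeff := by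
      rw [← ZMod.intCast_zmod_eq_zero_iff_dvd]
      simpa using congrArg (Polynomial.coeff · c.natDegree) hmap
    calc _ ≤ Nat.card (ZMod p) := Set.ncard_le_card _
      _ = p := Nat.card_zmod p
      _ ≤ c.leadingCoeff.natAbs := Int.natAbs_le_of_dvd_ne_zero hp (leadingCoeff_ne_zero.mpr hc)
      _ ≤ _ := le_max_right _ _
  · have hroots : {x : ZMod p | Polynomial.aeval x c = 0} = c.rootSet (ZMod p) := by
      ext x
      simp [mem_rootSet', hmap]
    rw [hroots]
    exact (ncard_rootSet_le c _).trans (le_max_left _ _)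

end Polynomial

namespace MvPolynomial

variable {R : Type*} [CommRing R] [IsDomain R] [NormalizedGCDMonoid R] [CharZero R]

theorem exists_mul_add_mul_pderiv_one_eq_aeval_X_zero {f : MvPolynomial (Fin 2) R}
    (hf : Squarefree f) :
    ∃ u v : MvPolynomial (Fin 2) R, ∃ a : R[X], a ≠ 0 ∧
      u * f + v * pderiv 1 f = Polynomial.aeval (X 0) a := by
  set Ψ := Bivariate.equivMvPolynomial R
  obtain ⟨u, v, a, ha, h⟩ :=
    exists_mul_add_mul_derivative_eq_C (hf.map_equiv Ψ.symm)
  refine ⟨Ψ u, Ψ v, a, ha, ?_⟩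
  have := congrArg Ψ h
  rwa [map_add, map_mul, map_mul, ← Bivariate.pderiv_one_equivMvPolynomial,
    AlgEquiv.apply_symm_apply, Bivariate.equivMvPolynomial_C] at this

theorem exists_mul_add_mul_pderiv_zero_eq_aeval_X_one {f : MvPolynomial (Fin 2) R}
    (hf : Squarefree f) :
    ∃ u v : MvPolynomial (Fin 2) R, ∃ a : R[X], a ≠ 0 ∧
      u * f + v * pderiv 0 f = Polynomial.aeval (X 1) a := by
  set s := Equiv.swap (0 : Fin 2) 1
  have hss : ∀ g : MvPolynomial (Fin 2) R, rename s (rename s g) = g := by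
    intro g
    simp [rename_rename, Function.comp_def, s, ← Function.id_def]
  obtain ⟨u, v, a, ha, h⟩ :=
    exists_mul_add_mul_pderiv_one_eq_aeval_X_zero (hf.map_equiv (renameEquiv R s))
  refine ⟨rename s u, rename s v, a, ha, ?_⟩
  have h1 : (1 : Fin 2) = s 0 := rfl
  have := congrArg (rename s) h
  rwa [map_add, map_mul, map_mul, renameEquiv_apply, hss, h1, pderiv_rename s.injective, hss,
    ← Polynomial.aeval_algHom_apply, rename_X] at this

theorem aeval_eq_zero_of_mul_add_mul_eq_aeval_X {σ R S : Type*} [CommSemiring R]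
    [CommSemiring S] [Algebra R S] {f g u v : MvPolynomial σ R} {i : σ} {a : R[X]}
    (h : u * f + v * g = Polynomial.aeval (X i) a) {x : σ → S}
    (hf : aeval x f = 0) (hg : aeval x g = 0) :
    Polynomial.aeval (x i) a = 0 := by
  have := congrArg (aeval x) h
  rwa [map_add, map_mul, map_mul, hf, hg, mul_zero, mul_zero, add_zero,
    ← Polynomial.aeval_algHom_apply, MvPolynomial.aeval_X, eq_comm] at this

end MvPolynomial

theorem stmt_5 (f : MvPolynomial (Fin 2) ℤ) (hsf : Squarefree f) :
    ∃ C : ℕ, 0 < C ∧ ∀ p : ℕ, p.Prime →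
      Nat.card {td : ZMod p × ZMod p |
          MvPolynomial.aeval ![td.1, td.2] f = 0 ∧
          MvPolynomial.aeval ![td.1, td.2] (MvPolynomial.pderiv (0 : Fin 2) f) = 0 ∧
          MvPolynomial.aeval ![td.1, td.2] (MvPolynomial.pderiv (1 : Fin 2) f) = 0} ≤ C := by
  obtain ⟨u, v, a, ha, hD⟩ := exists_mul_add_mul_pderiv_zero_eq_aeval_X_one hsf
  obtain ⟨u', v', b, hb, hT⟩ := exists_mul_add_mul_pderiv_one_eq_aeval_X_zero hsf
  have hbound : ∀ c : ℤ[X], c ≠ 0 → 0 < max c.natDegree c.leadingCoeff.natAbs := fun c hc =>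
    lt_max_of_lt_right (Int.natAbs_pos.mpr (leadingCoeff_ne_zero.mpr hc))
  refine ⟨max b.natDegree b.leadingCoeff.natAbs * max a.natDegree a.leadingCoeff.natAbs,
    Nat.mul_pos (hbound b hb) (hbound a ha), fun p hp => ?_⟩
  have := Fact.mk hp
  calc _ ≤ Nat.card ({T : ZMod p | Polynomial.aeval T b = 0} ×ˢ
        {D : ZMod p | Polynomial.aeval D a = 0}) := by
        refine Nat.card_mono (Set.toFinite _) ?_
        rintro ⟨T, D⟩ ⟨h, hx, hy⟩
        exact ⟨aeval_eq_zero_of_mul_add_mul_eq_aeval_X (x := ![T, D]) hT h hy,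
          aeval_eq_zero_of_mul_add_mul_eq_aeval_X (x := ![T, D]) hD h hx⟩
    _ ≤ _ := by
        rw [Nat.card_coe_set_eq, Set.ncard_prod]
        exact Nat.mul_le_mul (ncard_setOf_aeval_eq_zero_le hb p)
          (ncard_setOf_aeval_eq_zero_le ha p)
end

section
/- Let ℓ be an odd prime. Then the number of matrices g ∈ GL₂(ℤ/ℓ²ℤ) satisfying (tr g)² = 4·det g in ℤ/ℓ²ℤ is exactly ℓ³(ℓ − 1)(ℓ² + ℓ − 1). Equivalently, for f(x,y) = x² − 4y, |C_f(ℓ²)| / |GL₂(ℤ/ℓ²ℤ)| = (ℓ² + ℓ − 1) / (ℓ²(ℓ² − 1)). -/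
/-!
Over a ring in which `2` is invertible, the coordinates `t = a + d`, `v = a - d`, `B = 2b`,
`C = 2c` of `g = !![a, b; c, d]` turn `tr² - 4 det` into `v² + BC`, and on the locus
`tr² = 4 det` the matrix `g` is invertible exactly when `t` is a unit. So the count is
`|(ℤ/ℓ²)ˣ|` times the number of points of the quadric `v² + BC = 0` over `ℤ/ℓ²`.

The nonunits of `ℤ/ℓ²` form an ideal of size `ℓ` with square zero. When `B` is a unit, `C` is
determined by `v`. When it is not, `v² = -BC` forces `v` to be a nonunit, so `v² = 0` and the
equation becomes `BC = 0`, which holds iff `C` is a nonunit or `B = 0`.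

Finally `|GL₂(ℤ/ℓ²)| = ℓ⁴ |GL₂(𝔽_ℓ)|`, since reduction mod `ℓ` is a surjective additive
map on matrices and a determinant is a unit iff its reduction is.
-/

open Matrix Finset

theorem AddMonoidHom.card_filter_mem_mul_card {G H : Type*} [AddGroup G] [Fintype G]
    [AddGroup H] [Fintype H] [DecidableEq H] (f : G →+ H) (hf : Function.Surjective f)
    (s : Finset H) : #{g | f g ∈ s} * Fintype.card H = #s * Fintype.card G := by
  have hfiber (t : Finset H) : #{g | f g ∈ t} = #t * #{g | f g = 0} := by
    rw [card_eq_sum_card_fiberwise (s := {g | f g ∈ t}) (t := t) fun g hg => (mem_filter.1 hg).2]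
    refine sum_const_nat fun h hh => ?_
    rw [filter_filter, ← AddMonoidHom.card_fiber_eq_of_mem_range f (hf h) (hf 0)]
    congr 1
    ext g
    simp only [mem_filter, mem_univ, true_and, and_iff_right_iff_imp]
    rintro rfl
    exact hh
  have hcard : Fintype.card G = Fintype.card H * #{g | f g = 0} := by
    simpa using hfiber univ
  rw [hfiber, hcard]
  ring

theorem card_filter_isUnit_and {M : Type*} [Monoid M] [Fintype M] [DecidableEq M]
    (P : M → Prop) [DecidablePred P] :
    #{x : M | IsUnit x ∧ P x} = Fintype.card {u : Mˣ // P u} := by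
  rw [Fintype.card_subtype, ← card_map ⟨Units.val, Units.val_injective⟩]
  congr 1
  ext x
  simp only [mem_filter, mem_univ, true_and, mem_map, Function.Embedding.coeFn_mk]
  constructor
  · rintro ⟨⟨u, rfl⟩, hu⟩
    exact ⟨u, hu, rfl⟩
  · rintro ⟨u, hu, rfl⟩
    exact ⟨u.isUnit, hu⟩

theorem card_filter_isUnit {M : Type*} [Monoid M] [Fintype M] [DecidableEq M] :
    #{x : M | IsUnit x} = Fintype.card Mˣ := by
  simpa using card_filter_isUnit_and (fun _ : M => True)

theorem Matrix.card_GL_eq_card_filter_isUnit_det {n R : Type*} [Fintype n] [DecidableEq n]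
    [CommRing R] [Fintype R] [DecidableEq R] :
    Nat.card (GL n R) = #{M : Matrix n n R | IsUnit M.det} := by
  simp_rw [← isUnit_iff_isUnit_det, card_filter_isUnit, Nat.card_eq_fintype_card]

theorem card_filter_sq_add_mul_eq_zero_and_isUnit {R : Type*} [CommRing R] [Fintype R]
    [DecidableEq R] :
    #{x : R × R × R | x.1 ^ 2 + x.2.1 * x.2.2 = 0 ∧ IsUnit x.2.1} =
      Fintype.card R * Fintype.card Rˣ := by
  rw [← Fintype.card_subtype, ← Fintype.card_prod]
  refine Fintype.card_congr
    { toFun x := (x.1.1, x.2.2.unit)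
      invFun y := ⟨(y.1, y.2, -(↑y.2⁻¹ * y.1 ^ 2)), by simp, y.2.isUnit⟩
      left_inv := ?_
      right_inv y := by ext <;> simp }
  rintro ⟨⟨v, B, C⟩, h, hB⟩
  have hinv := hB.val_inv_mul
  ext
  · rfl
  · rfl
  · simp only
    linear_combination (-↑hB.unit⁻¹) * h + C * hinv

theorem Matrix.sq_trace_sub_four_mul_det {R : Type*} [CommRing R]
    (M : Matrix (Fin 2) (Fin 2) R) :
    M.trace ^ 2 - 4 * M.det = (M 0 0 - M 1 1) ^ 2 + (2 * M 0 1) * (2 * M 1 0) := by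
  rw [trace_fin_two, det_fin_two]
  ring

section TwoInvertible

variable {R : Type*} [CommRing R] [Invertible (2 : R)]

def Matrix.traceCoordsEquiv : Matrix (Fin 2) (Fin 2) R ≃ R × R × R × R where
  toFun M := (M.trace, M 0 0 - M 1 1, 2 * M 0 1, 2 * M 1 0)
  invFun x := !![⅟2 * (x.1 + x.2.1), ⅟2 * x.2.2.1; ⅟2 * x.2.2.2, ⅟2 * (x.1 - x.2.1)]
  left_inv M := by
    have h := invOf_mul_self (2 : R)
    ext i j
    fin_cases i <;> fin_cases j <;>
      simp only [trace_fin_two, of_apply, cons_val', cons_val_zero, cons_val_one, empty_val',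
        cons_val_fin_one, Fin.zero_eta, Fin.mk_one]
    · linear_combination M 0 0 * h
    · linear_combination M 0 1 * h
    · linear_combination M 1 0 * h
    · linear_combination M 1 1 * h
  right_inv := by
    rintro ⟨t, v, B, C⟩
    have h := mul_invOf_self (2 : R)
    simp only [trace_fin_two, of_apply, cons_val', cons_val_zero, cons_val_one, empty_val',
        cons_val_fin_one, Prod.mk.injEq]
    refine ⟨?_, ?_, ?_, ?_⟩
    · linear_combination t * h
    · linear_combination v * h
    · linear_combination B * h
    · linear_combination C * h

theorem Matrix.isUnit_det_and_sq_trace_iff (M : Matrix (Fin 2) (Fin 2) R) :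
    IsUnit M.det ∧ M.trace ^ 2 = 4 * M.det ↔
      IsUnit M.trace ∧ (M 0 0 - M 1 1) ^ 2 + (2 * M 0 1) * (2 * M 1 0) = 0 := by
  have hdisc := M.sq_trace_sub_four_mul_det
  have h4 : IsUnit (4 : R) := by
    have h := (isUnit_of_invertible (2 : R)).pow 2
    norm_num at h
    exact h
  constructor
  · rintro ⟨hdet, h⟩
    exact ⟨(isUnit_pow_iff two_ne_zero).1 (h ▸ h4.mul hdet), by linear_combination h - hdisc⟩
  · rintro ⟨htr, hE⟩
    have h : M.trace ^ 2 = 4 * M.det := by linear_combination hdisc + hE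
    exact ⟨isUnit_of_mul_isUnit_right (h ▸ htr.pow 2), h⟩

theorem Matrix.card_GL_sq_trace_eq_four_mul_det [Fintype R] [DecidableEq R] :
    Nat.card {g : GL (Fin 2) R |
        (g : Matrix (Fin 2) (Fin 2) R).trace ^ 2 = 4 * (g : Matrix (Fin 2) (Fin 2) R).det} =
      Fintype.card Rˣ * #{x : R × R × R | x.1 ^ 2 + x.2.1 * x.2.2 = 0} := by
  rw [Set.coe_ofPred, Nat.card_eq_fintype_card,
    ← card_filter_isUnit_and (fun M : Matrix (Fin 2) (Fin 2) R => M.trace ^ 2 = 4 * M.det)]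
  simp_rw [isUnit_iff_isUnit_det]
  rw [card_equiv traceCoordsEquiv
      (t := {y : R × R × R × R | IsUnit y.1 ∧ y.2.1 ^ 2 + y.2.2.1 * y.2.2.2 = 0})
      fun M => by simp [isUnit_det_and_sq_trace_iff, traceCoordsEquiv],
    ← univ_product_univ,
    filter_product (p := IsUnit) (q := fun x : R × R × R => x.1 ^ 2 + x.2.1 * x.2.2 = 0),
    card_product, card_filter_isUnit]

end TwoInvertible

namespace ZMod

variable {p : ℕ} [Fact p.Prime]

theorem isUnit_iff_not_dvd_val {k : ℕ} (hk : k ≠ 0) (x : ZMod (p ^ k)) :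
    IsUnit x ↔ ¬p ∣ x.val := by
  have h := isUnit_iff_coprime x.val (p ^ k)
  rw [natCast_zmod_val] at h
  rw [h, Nat.coprime_pow_right_iff (Nat.pos_of_ne_zero hk), Nat.coprime_comm,
    (Fact.out : p.Prime).coprime_iff_not_dvd]

theorem isUnit_castHom_iff {k : ℕ} (hk : k ≠ 0) (x : ZMod (p ^ k)) :
    IsUnit (castHom (dvd_pow_self p hk) (ZMod p) x) ↔ IsUnit x := by
  rw [isUnit_iff_not_dvd_val hk, isUnit_iff_ne_zero, castHom_apply, cast_eq_val, Ne,
    natCast_eq_zero_iff]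

theorem card_units_prime_pow {k : ℕ} (hk : k ≠ 0) :
    Fintype.card (ZMod (p ^ k))ˣ = p ^ (k - 1) * (p - 1) := by
  rw [card_units_eq_totient, Nat.totient_prime_pow Fact.out (Nat.pos_of_ne_zero hk)]

theorem card_filter_not_isUnit_prime_pow {k : ℕ} (hk : k ≠ 0) :
    #{x : ZMod (p ^ k) | ¬IsUnit x} = p ^ (k - 1) := by
  have h := card_filter_add_card_filter_not (s := univ) (IsUnit : ZMod (p ^ k) → Prop)
  rw [card_univ, ZMod.card, card_filter_isUnit, card_units_prime_pow hk] at h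
  have hsplit : p ^ (k - 1) * (p - 1) + p ^ (k - 1) = p ^ k := by
    rw [← Nat.mul_succ, Nat.succ_eq_add_one, Nat.sub_add_cancel (Fact.out : p.Prime).one_le,
      ← pow_succ, Nat.sub_add_cancel (Nat.pos_of_ne_zero hk)]
  omega

theorem mul_eq_zero_of_not_isUnit {x y : ZMod (p ^ 2)} (hx : ¬IsUnit x) (hy : ¬IsUnit y) :
    x * y = 0 := by
  rw [isUnit_iff_not_dvd_val two_ne_zero, not_not] at hx hy
  rw [← natCast_zmod_val x, ← natCast_zmod_val y, ← Nat.cast_mul, natCast_eq_zero_iff]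
  have h := Nat.mul_dvd_mul hx hy
  rwa [← sq] at h

theorem card_filter_not_isUnit_and_mul_eq_zero :
    #{x : ZMod (p ^ 2) × ZMod (p ^ 2) | ¬IsUnit x.1 ∧ x.1 * x.2 = 0} = p * p + p * (p - 1) := by
  have h : ({x : ZMod (p ^ 2) × ZMod (p ^ 2) | ¬IsUnit x.1 ∧ x.1 * x.2 = 0} : Finset _) =
      ({x | ¬IsUnit x} : Finset (ZMod (p ^ 2))) ×ˢ ({x | ¬IsUnit x} : Finset (ZMod (p ^ 2))) ∪
        {0} ×ˢ ({x | IsUnit x} : Finset (ZMod (p ^ 2))) := by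
    ext ⟨B, C⟩
    simp only [mem_filter, mem_univ, true_and, mem_union, mem_product, mem_singleton]
    constructor
    · rintro ⟨hB, hBC⟩
      by_cases hC : IsUnit C
      · exact Or.inr ⟨hC.mul_left_eq_zero.1 hBC, hC⟩
      · exact Or.inl ⟨hB, hC⟩
    · rintro (⟨hB, hC⟩ | ⟨rfl, -⟩)
      · exact ⟨hB, mul_eq_zero_of_not_isUnit hB hC⟩
      · simp [isUnit_iff_not_dvd_val two_ne_zero]
  rw [h, card_union_of_disjoint
      (disjoint_product.2 (Or.inr (disjoint_filter_filter_not _ _ _).symm)),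
    card_product, card_product, card_singleton, card_filter_not_isUnit_prime_pow two_ne_zero,
    card_filter_isUnit, card_units_prime_pow two_ne_zero]
  simp

theorem card_filter_sq_add_mul_eq_zero_and_not_isUnit :
    #{x : ZMod (p ^ 2) × ZMod (p ^ 2) × ZMod (p ^ 2) |
      x.1 ^ 2 + x.2.1 * x.2.2 = 0 ∧ ¬IsUnit x.2.1} = p * (p * p + p * (p - 1)) := by
  have h : ({x : ZMod (p ^ 2) × ZMod (p ^ 2) × ZMod (p ^ 2) |
      x.1 ^ 2 + x.2.1 * x.2.2 = 0 ∧ ¬IsUnit x.2.1} : Finset _) =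
      ({v | ¬IsUnit v} : Finset (ZMod (p ^ 2))) ×ˢ
        ({x | ¬IsUnit x.1 ∧ x.1 * x.2 = 0} : Finset (ZMod (p ^ 2) × ZMod (p ^ 2))) := by
    ext ⟨v, B, C⟩
    simp only [mem_filter, mem_univ, true_and, mem_product]
    constructor
    · rintro ⟨h, hB⟩
      have hBC : B * C = -v ^ 2 := by linear_combination h
      have hv : ¬IsUnit v := fun hv => hB (isUnit_of_mul_isUnit_left (hBC ▸ (hv.pow 2).neg))
      exact ⟨hv, hB, by linear_combination h - mul_eq_zero_of_not_isUnit hv hv⟩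
    · rintro ⟨hv, hB, hBC⟩
      exact ⟨by linear_combination hBC + mul_eq_zero_of_not_isUnit hv hv, hB⟩
  rw [h, card_product, card_filter_not_isUnit_prime_pow two_ne_zero,
    card_filter_not_isUnit_and_mul_eq_zero]
  simp

theorem card_filter_sq_add_mul_eq_zero :
    #{x : ZMod (p ^ 2) × ZMod (p ^ 2) × ZMod (p ^ 2) | x.1 ^ 2 + x.2.1 * x.2.2 = 0} =
      p ^ 2 * (p * (p - 1)) + p * (p * p + p * (p - 1)) := by
  rw [← card_filter_add_card_filter_not (p := fun x => IsUnit x.2.1), filter_filter,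
    filter_filter, card_filter_sq_add_mul_eq_zero_and_isUnit,
    card_filter_sq_add_mul_eq_zero_and_not_isUnit, ZMod.card, card_units_prime_pow two_ne_zero]
  simp

theorem card_GL_prime_pow (n : ℕ) {k : ℕ} (hk : k ≠ 0) :
    Nat.card (GL (Fin n) (ZMod (p ^ k))) =
      Nat.card (GL (Fin n) (ZMod p)) * p ^ ((k - 1) * n ^ 2) := by
  set ρ := castHom (dvd_pow_self p hk) (ZMod p)
  set φ : Matrix (Fin n) (Fin n) (ZMod (p ^ k)) →+* Matrix (Fin n) (Fin n) (ZMod p) :=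
    ρ.mapMatrix
  have hsurj : Function.Surjective φ :=
    fun N => ⟨N.map (Function.surjInv (castHom_surjective (dvd_pow_self p hk))), by
      ext; simp [φ, ρ, Function.surjInv_eq]⟩
  have h := φ.toAddMonoidHom.card_filter_mem_mul_card hsurj {N | IsUnit N.det}
  simp only [RingHom.toAddMonoidHom_eq_coe, AddMonoidHom.coe_coe, mem_filter, mem_univ, true_and,
    φ, ← RingHom.map_det, ρ, isUnit_castHom_iff hk] at h
  have hcard (q : ℕ) [NeZero q] : Fintype.card (Matrix (Fin n) (Fin n) (ZMod q)) = q ^ n ^ 2 := by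
    rw [Fintype.card_congr Matrix.of.symm]
    simp [sq, pow_mul]
  rw [hcard, hcard] at h
  rw [card_GL_eq_card_filter_isUnit_det, card_GL_eq_card_filter_isUnit_det]
  refine Nat.eq_of_mul_eq_mul_right (pow_pos (Fact.out : p.Prime).pos (n ^ 2)) ?_
  obtain ⟨j, rfl⟩ := Nat.exists_eq_add_one_of_ne_zero hk
  rw [h, Nat.add_sub_cancel]
  ring

end ZMod

theorem stmt_13 (ℓ : ℕ) (hℓ : ℓ.Prime) (hodd : ℓ ≠ 2) :
    (Nat.card {g : GL (Fin 2) (ZMod (ℓ ^ 2)) |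
        (Matrix.trace (g : Matrix (Fin 2) (Fin 2) (ZMod (ℓ ^ 2)))) ^ 2 =
          4 * Matrix.det (g : Matrix (Fin 2) (Fin 2) (ZMod (ℓ ^ 2)))} : ℤ) =
      (ℓ : ℤ) ^ 3 * ((ℓ : ℤ) - 1) * ((ℓ : ℤ) ^ 2 + (ℓ : ℤ) - 1) ∧
    (Nat.card {g : GL (Fin 2) (ZMod (ℓ ^ 2)) |
        (Matrix.trace (g : Matrix (Fin 2) (Fin 2) (ZMod (ℓ ^ 2)))) ^ 2 =
          4 * Matrix.det (g : Matrix (Fin 2) (Fin 2) (ZMod (ℓ ^ 2)))} : ℝ) /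
      (Nat.card (GL (Fin 2) (ZMod (ℓ ^ 2))) : ℝ) =
      ((ℓ : ℝ) ^ 2 + (ℓ : ℝ) - 1) / ((ℓ : ℝ) ^ 2 * ((ℓ : ℝ) ^ 2 - 1)) := by
  have : Fact ℓ.Prime := ⟨hℓ⟩
  have htwo : IsUnit (2 : ZMod (ℓ ^ 2)) := by
    exact_mod_cast (ZMod.isUnit_iff_coprime 2 (ℓ ^ 2)).2
      (((Nat.coprime_primes Nat.prime_two hℓ).2 (Ne.symm hodd)).pow_right 2)
  let := htwo.invertible
  have hcount := Matrix.card_GL_sq_trace_eq_four_mul_det (R := ZMod (ℓ ^ 2))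
  rw [ZMod.card_units_prime_pow two_ne_zero, ZMod.card_filter_sq_add_mul_eq_zero] at hcount
  simp only [Nat.reduceSub, pow_one] at hcount
  have hGL : Nat.card (GL (Fin 2) (ZMod (ℓ ^ 2))) = (ℓ ^ 2 - 1) * (ℓ ^ 2 - ℓ) * ℓ ^ 4 := by
    rw [ZMod.card_GL_prime_pow 2 two_ne_zero, Matrix.card_GL_field, Fin.prod_univ_two,
      ZMod.card]
    norm_num
  have h1 : 1 ≤ ℓ := hℓ.one_le
  have h2 : 2 ≤ ℓ := hℓ.two_le
  have hℓ2 : ℓ ≤ ℓ ^ 2 := Nat.le_self_pow two_ne_zero ℓ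
  have h1ℓ2 : 1 ≤ ℓ ^ 2 := h1.trans hℓ2
  have h2R : (2 : ℝ) ≤ ℓ := by exact_mod_cast h2
  refine ⟨?_, ?_⟩
  · rw [hcount]
    push_cast [Nat.cast_sub h1]
    ring
  · rw [hcount, hGL]
    push_cast [Nat.cast_sub h1, Nat.cast_sub hℓ2, Nat.cast_sub h1ℓ2]
    have : (0 : ℝ) < (ℓ : ℝ) ^ 2 - 1 := by nlinarith
    have : (0 : ℝ) < (ℓ : ℝ) ^ 2 - ℓ := by nlinarith
    have : (0 : ℝ) < (ℓ : ℝ) := by linarith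
    rw [div_eq_div_iff (by positivity) (by positivity)]
    ring
end
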